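/- Assume μ_c > 0 and 0 < μ < μ_c. Then there exists a unique s_c > 0 such that s_c = N*(s_c) (the critical squared frequency). -/

import Mathlib

open MeasureTheory Set

noncomputable section

/-- A function is admissible if it is twice continuously differentiable on `[0,1]`
and vanishes at the endpoints (the C² representatives of `H₀¹(0,1) ∩ H²(0,1)`). -/
def Admissible (ψ : ℝ → ℝ) : Prop :=
  ContDiffOn ℝ 2 ψ (Set.Icc (0:ℝ) 1) ∧ ψ 0 = 0 ∧ ψ 1 = 0

/-- The boundary energy `Z(ψ) = k1·ψ′(1)² + k0·ψ′(0)²`. -/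
def Z (k0 k1 : ℝ) (ψ : ℝ → ℝ) : ℝ :=
  k1 * (deriv ψ 1) ^ 2 + k0 * (deriv ψ 0) ^ 2

/-- The Dirichlet-type energy `D(ψ) = ∫₀¹ ψ″(y)² dy`. -/
def D (ψ : ℝ → ℝ) : ℝ :=
  ∫ y in (0:ℝ)..1, (deriv (deriv ψ) y) ^ 2

/-- The set of Rayleigh quotients `Z(ψ)/D(ψ)` over admissible `ψ` with `D(ψ) ≠ 0`. -/
def mucSet (k0 k1 : ℝ) : Set ℝ :=
  { r : ℝ | ∃ ψ : ℝ → ℝ, Admissible ψ ∧ D ψ ≠ 0 ∧ r = Z k0 k1 ψ / D ψ }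

/-- The critical viscosity `μ_c`. -/
def muc (k0 k1 : ℝ) : ℝ := sSup (mucSet k0 k1)


/-- The energy functional `E_s(ψ)` (with `s = ξ²` the squared frequency). -/
def E (k0 k1 μ s : ℝ) (ψ : ℝ → ℝ) : ℝ :=
  μ / 2 * ∫ y in (0:ℝ)..1,
      ((deriv (deriv ψ) y) ^ 2 + 2 * s * (deriv ψ y) ^ 2 + s ^ 2 * (ψ y) ^ 2)
  - k1 / 2 * (deriv ψ 1) ^ 2 - k0 / 2 * (deriv ψ 0) ^ 2

/-- The constraint functional `J_s(ψ)`. -/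
def J (s : ℝ) (ψ : ℝ → ℝ) : ℝ :=
  1 / 2 * ∫ y in (0:ℝ)..1, (s * (ψ y) ^ 2 + (deriv ψ y) ^ 2)

/-- The constant `C₀ = |k1 + k0| + μ⁻¹·max(k0², k1²)`. -/
def C0 (k0 k1 μ : ℝ) : ℝ := |k1 + k0| + μ⁻¹ * max (k0 ^ 2) (k1 ^ 2)

/-- A function is nonzero on `[0,1]` if it does not vanish identically there. -/
def NonzeroOn01 (ψ : ℝ → ℝ) : Prop := ∃ y ∈ Set.Icc (0:ℝ) 1, ψ y ≠ 0

/-- The set of quotients defining the modified variational problem `N*(s)`. -/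
def NstarSet (k0 k1 μ s : ℝ) : Set ℝ :=
  { r : ℝ | ∃ ψ : ℝ → ℝ, Admissible ψ ∧ NonzeroOn01 ψ ∧
      r = (Z k0 k1 ψ - μ * D ψ) /
        (μ * ∫ y in (0:ℝ)..1, (2 * (deriv ψ y) ^ 2 + s * (ψ y) ^ 2)) }

/-- The modified variational quantity `N*(s)`. -/
def Nstar (k0 k1 μ s : ℝ) : ℝ := sSup (NstarSet k0 k1 μ s)

/-- The set of quotients `−E_s(ψ)/J_s(ψ)` defining the growth rate `λ(s)`. -/
def lamSet (k0 k1 μ s : ℝ) : Set ℝ :=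
  { r : ℝ | ∃ ψ : ℝ → ℝ, Admissible ψ ∧ NonzeroOn01 ψ ∧
      r = -E k0 k1 μ s ψ / J s ψ }

/-- The growth rate `λ(s) = sup(−E_s(ψ)/J_s(ψ))`. -/
def lam (k0 k1 μ s : ℝ) : ℝ := sSup (lamSet k0 k1 μ s)

end

/-! For an admissible nonzero `ψ` write `a = Z(ψ) - μ D(ψ)`, `b = 2μ∫ψ'²`, `c = μ∫ψ²`, so that
`N*(s)` is the supremum of `a / (b + s c)`. Whenever `a > 0` the equation `t (b + t c) = a` has a
unique positive root `t_ψ`, and comparing `a / (b + s c)` with `s` amounts to comparing `t_ψ`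
with `s`; hence the only positive fixed point of `N*` is `σ = sup t_ψ`. The roots are bounded
because `ψ'` vanishes somewhere (Rolle), so that `ψ'(x)² ≤ ε⁻¹∫ψ'² + ε∫ψ''²`, which turns into
`Z(ψ) - μ D(ψ) ≤ K ∫ψ'²`; the hypothesis `μ < μ_c` provides a `ψ` with `a > 0`. -/

open intervalIntegral

theorem exists_pos_mul_add_mul_eq {a b c : ℝ} (ha : 0 < a) (hb : 0 ≤ b) (hc : 0 < c) :
    ∃ t, 0 < t ∧ t * (b + t * c) = a := by
  have hdisc : 0 ≤ b ^ 2 + 4 * c * a := by positivity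
  have hsqrt : b < √(b ^ 2 + 4 * c * a) := by
    rw [Real.lt_sqrt hb]; nlinarith [mul_pos hc ha]
  refine ⟨(√(b ^ 2 + 4 * c * a) - b) / (2 * c), by apply div_pos <;> linarith, ?_⟩
  field_simp
  nlinarith [Real.sq_sqrt hdisc]

section RatioSup

variable {ι : Type*}

noncomputable def ratioSup (a b c : ι → ℝ) (s : ℝ) : ℝ :=
  sSup (range fun i => a i / (b i + s * c i))

def rootSet (a b c : ι → ℝ) : Set ℝ :=
  {t | 0 < t ∧ ∃ i, t * (b i + t * c i) = a i}

variable {a b c : ι → ℝ} {K s : ℝ}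

theorem bddAbove_range_div (hb : ∀ i, 0 ≤ b i) (hc : ∀ i, 0 < c i) (hK : ∀ i, a i ≤ K * b i)
    (hs : 0 < s) : BddAbove (range fun i => a i / (b i + s * c i)) := by
  refine ⟨max K 0, ?_⟩
  rintro _ ⟨i, rfl⟩
  have hsc := mul_pos hs (hc i)
  refine div_le_of_le_mul₀ (by linarith [hb i]) (le_max_right K 0) ?_
  nlinarith [hK i, hb i, le_max_left K 0, le_max_right K 0]

theorem le_max_of_mem_rootSet (hb : ∀ i, 0 ≤ b i) (hc : ∀ i, 0 < c i) (hK : ∀ i, a i ≤ K * b i)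
    {t : ℝ} (ht : t ∈ rootSet a b c) : t ≤ max K 0 := by
  obtain ⟨ht, i, hti⟩ := ht
  by_contra! hlt
  nlinarith [hK i, hb i, mul_pos (mul_pos ht ht) (hc i), le_max_left K 0,
    mul_le_mul_of_nonneg_right hlt.le (hb i)]

theorem ratioSup_le_sSup_rootSet [Nonempty ι] (hb : ∀ i, 0 ≤ b i) (hc : ∀ i, 0 < c i)
    (hT : BddAbove (rootSet a b c)) (hTne : (rootSet a b c).Nonempty)
    (hs : sSup (rootSet a b c) ≤ s) : ratioSup a b c s ≤ sSup (rootSet a b c) := by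
  obtain ⟨t₀, ht₀⟩ := hTne
  have hσ : 0 < sSup (rootSet a b c) := ht₀.1.trans_le (le_csSup hT ht₀)
  refine csSup_le (range_nonempty _) ?_
  rintro _ ⟨i, rfl⟩
  have hden : 0 < b i + s * c i := by nlinarith [hb i, mul_pos (hσ.trans_le hs) (hc i)]
  rcases le_or_gt (a i) 0 with ha | ha
  · exact (div_nonpos_of_nonpos_of_nonneg ha hden.le).trans hσ.le
  obtain ⟨t, ht, hti⟩ := exists_pos_mul_add_mul_eq ha (hb i) (hc i)
  have htσ : t ≤ sSup (rootSet a b c) := le_csSup hT ⟨ht, i, hti⟩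
  refine (div_le_of_le_mul₀ hden.le ht.le ?_).trans htσ
  rw [← hti]
  nlinarith [mul_le_mul_of_nonneg_left (htσ.trans hs) (mul_nonneg ht.le (hc i).le)]

theorem sSup_rootSet_le_ratioSup (hb : ∀ i, 0 ≤ b i) (hc : ∀ i, 0 < c i)
    (hT : BddAbove (rootSet a b c)) (hTne : (rootSet a b c).Nonempty)
    (hF : BddAbove (range fun i => a i / (b i + sSup (rootSet a b c) * c i))) :
    sSup (rootSet a b c) ≤ ratioSup a b c (sSup (rootSet a b c)) := by
  set σ := sSup (rootSet a b c)
  obtain ⟨t₀, ht₀⟩ := hTne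
  have hσ : 0 < σ := ht₀.1.trans_le (le_csSup hT ht₀)
  have hsq : ∀ t ∈ rootSet a b c, t ^ 2 ≤ σ * ratioSup a b c σ := by
    rintro t ⟨ht, i, hti⟩
    have htσ : t ≤ σ := le_csSup hT ⟨ht, i, hti⟩
    have hden : 0 < b i + σ * c i := by nlinarith [hb i, mul_pos hσ (hc i)]
    calc t ^ 2 ≤ σ * (a i / (b i + σ * c i)) := by
          rw [mul_div_assoc', le_div_iff₀ hden, ← hti]
          nlinarith [mul_nonneg (mul_nonneg ht.le (hb i)) (sub_nonneg.2 htσ)]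
      _ ≤ σ * ratioSup a b c σ := by
          gcongr
          exact le_csSup hF ⟨i, rfl⟩
  have hσsqrt : σ ≤ √(σ * ratioSup a b c σ) :=
    csSup_le ⟨t₀, ht₀⟩ fun t ht => (Real.le_sqrt' ht.1).2 (hsq t ht)
  have := (Real.le_sqrt' hσ).1 hσsqrt
  nlinarith

theorem sSup_rootSet_le_max (hb : ∀ i, 0 ≤ b i) (hc : ∀ i, 0 < c i)
    (hTne : (rootSet a b c).Nonempty) (hs : 0 < s)
    (hF : BddAbove (range fun i => a i / (b i + s * c i))) :
    sSup (rootSet a b c) ≤ max s (ratioSup a b c s) := by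
  refine csSup_le hTne ?_
  rintro t ⟨ht, i, hti⟩
  rcases le_or_gt t s with hts | hst
  · exact le_max_of_le_left hts
  refine le_max_of_le_right (le_trans ?_ (le_csSup hF ⟨i, rfl⟩))
  have hden : 0 < b i + s * c i := by nlinarith [hb i, mul_pos hs (hc i)]
  rw [le_div_iff₀ hden, ← hti]
  nlinarith [mul_le_mul_of_nonneg_left hst.le (mul_nonneg ht.le (hc i).le)]

theorem existsUnique_pos_eq_ratioSup (hb : ∀ i, 0 ≤ b i) (hc : ∀ i, 0 < c i)
    (hK : ∀ i, a i ≤ K * b i) (ha : ∃ i, 0 < a i) :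
    ∃! s, 0 < s ∧ s = ratioSup a b c s := by
  obtain ⟨i₀, hi₀⟩ := ha
  have : Nonempty ι := ⟨i₀⟩
  obtain ⟨t₀, ht₀, hti₀⟩ := exists_pos_mul_add_mul_eq hi₀ (hb i₀) (hc i₀)
  have hTne : (rootSet a b c).Nonempty := ⟨t₀, ht₀, i₀, hti₀⟩
  have hT : BddAbove (rootSet a b c) := ⟨max K 0, fun t => le_max_of_mem_rootSet hb hc hK⟩
  set σ := sSup (rootSet a b c)
  have hσ : 0 < σ := ht₀.trans_le (le_csSup hT ⟨ht₀, i₀, hti₀⟩)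
  refine ⟨σ, ⟨hσ, le_antisymm ?_ (ratioSup_le_sSup_rootSet hb hc hT hTne le_rfl)⟩, ?_⟩
  · exact sSup_rootSet_le_ratioSup hb hc hT hTne (bddAbove_range_div hb hc hK hσ)
  rintro s ⟨hs, hfix⟩
  have hσs : σ ≤ s := by
    simpa [← hfix] using sSup_rootSet_le_max hb hc hTne hs (bddAbove_range_div hb hc hK hs)
  exact le_antisymm (hfix ▸ ratioSup_le_sSup_rootSet hb hc hT hTne hσs) hσs

end RatioSup

theorem sq_le_integral_of_hasDerivAt {g g' : ℝ → ℝ} {a b c x ε : ℝ}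
    (hg : ContinuousOn g (Icc a b)) (hg' : ContinuousOn g' (Icc a b))
    (hderiv : ∀ t ∈ Ioo a b, HasDerivAt g (g' t) t) (hc : c ∈ Icc a b) (hgc : g c = 0)
    (hx : x ∈ Icc a b) (hε : 0 < ε) :
    g x ^ 2 ≤ ∫ t in a..b, (g t ^ 2 / ε + ε * g' t ^ 2) := by
  set w : ℝ → ℝ := fun t => g t ^ 2 / ε + ε * g' t ^ 2
  have hab : a ≤ b := hc.1.trans hc.2
  have hyoung : ∀ t, |2 * g t * g' t| ≤ w t := fun t => by
    simp only [w]
    rw [abs_mul, abs_mul, abs_two, div_add' _ _ _ hε.ne', le_div_iff₀ hε]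
    have h := sq_nonneg (|g t| - ε * |g' t|)
    rw [sub_sq, mul_pow, sq_abs, sq_abs] at h
    linarith
  have hw_nonneg : ∀ t, 0 ≤ w t := fun t => (abs_nonneg _).trans (hyoung t)
  have hw_int : IntervalIntegrable w volume a b := by
    refine ContinuousOn.intervalIntegrable ?_
    rw [uIcc_of_le hab]
    exact ((hg.pow 2).div_const ε).add ((hg'.pow 2).const_smul ε)
  have hbound : ∀ y ∈ Icc a b, ∀ z ∈ Icc a b, y ≤ z → |g z ^ 2 - g y ^ 2| ≤ ∫ t in a..b, w t := by
    intro y hy z hz hyz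
    have hsub : Icc y z ⊆ Icc a b := Icc_subset_Icc hy.1 hz.2
    have hftc : ∫ t in y..z, 2 * g t * g' t = g z ^ 2 - g y ^ 2 := by
      refine integral_eq_sub_of_hasDerivAt_of_le (f := fun t => g t ^ 2) hyz
        ((hg.mono hsub).pow 2) (fun t ht => ?_) ?_
      · simpa using (hderiv t ⟨hy.1.trans_lt ht.1, ht.2.trans_le hz.2⟩).fun_pow 2
      · refine ContinuousOn.intervalIntegrable ?_
        rw [uIcc_of_le hyz]
        exact ((continuousOn_const.mul hg).mul hg').mono hsub
    rw [← hftc]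
    calc |∫ t in y..z, 2 * g t * g' t| ≤ ∫ t in y..z, |2 * g t * g' t| :=
          abs_integral_le_integral_abs hyz
      _ ≤ ∫ t in y..z, w t := by
          refine integral_mono_on hyz ?_ (hw_int.mono_set ?_) (fun t _ => hyoung t)
          · refine ContinuousOn.intervalIntegrable ?_
            rw [uIcc_of_le hyz]
            exact (((continuousOn_const.mul hg).mul hg').mono hsub).abs
          · rw [uIcc_of_le hyz, uIcc_of_le hab]; exact hsub
      _ ≤ ∫ t in a..b, w t :=
          integral_mono_interval hy.1 hyz hz.2 (ae_of_all _ hw_nonneg) hw_int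
  rcases le_total c x with hcx | hxc
  · simpa [hgc] using hbound c hc x hx hcx
  · simpa [hgc] using hbound x hx c hc hxc

theorem ContDiffOn.hasDerivAt_derivWithin_Icc {f : ℝ → ℝ} {a b t : ℝ} {n : WithTop ℕ∞}
    (hf : ContDiffOn ℝ n f (Icc a b)) (hn : n ≠ 0) (ht : t ∈ Ioo a b) :
    HasDerivAt f (derivWithin f (Icc a b) t) t :=
  ((hf.differentiableOn hn) t (Ioo_subset_Icc_self ht)).hasDerivWithinAt.hasDerivAt
    (Icc_mem_nhds ht.1 ht.2)

theorem sq_deriv_le_sq_derivWithin {f : ℝ → ℝ} {s : Set ℝ} {x : ℝ}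
    (hs : UniqueDiffWithinAt ℝ s x) :
    deriv f x ^ 2 ≤ derivWithin f s x ^ 2 := by
  by_cases hdx : DifferentiableAt ℝ f x
  · rw [hdx.derivWithin hs]
  · simpa [deriv_zero_of_not_differentiableAt hdx] using sq_nonneg _

namespace Admissible

variable {ψ : ℝ → ℝ} (hψ : Admissible ψ)
include hψ

theorem contDiffOn_derivWithin : ContDiffOn ℝ 1 (derivWithin ψ (Icc 0 1)) (Icc 0 1) :=
  hψ.1.derivWithin (uniqueDiffOn_Icc zero_lt_one) (by norm_num)

theorem deriv_eqOn : EqOn (deriv ψ) (derivWithin ψ (Icc 0 1)) (Ioo 0 1) := fun _ ht =>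
  (hψ.1.hasDerivAt_derivWithin_Icc two_ne_zero ht).deriv

theorem deriv_deriv_eqOn :
    EqOn (deriv (deriv ψ)) (derivWithin (derivWithin ψ (Icc 0 1)) (Icc 0 1)) (Ioo 0 1) :=
  fun t ht => by
    rw [(Filter.eventuallyEq_of_mem (Ioo_mem_nhds ht.1 ht.2) hψ.deriv_eqOn).deriv_eq]
    exact (hψ.contDiffOn_derivWithin.hasDerivAt_derivWithin_Icc one_ne_zero ht).deriv

theorem continuousOn_derivWithin_derivWithin :
    ContinuousOn (derivWithin (derivWithin ψ (Icc 0 1)) (Icc 0 1)) (Icc 0 1) :=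
  hψ.contDiffOn_derivWithin.continuousOn_derivWithin (uniqueDiffOn_Icc zero_lt_one) le_rfl

theorem integral_sq_deriv :
    ∫ y in (0:ℝ)..1, deriv ψ y ^ 2 = ∫ y in (0:ℝ)..1, derivWithin ψ (Icc 0 1) y ^ 2 :=
  integral_congr_Ioo_of_le zero_le_one fun _ ht => by simp only [hψ.deriv_eqOn ht]

theorem D_eq :
    D ψ = ∫ y in (0:ℝ)..1, derivWithin (derivWithin ψ (Icc 0 1)) (Icc 0 1) y ^ 2 :=
  integral_congr_Ioo_of_le zero_le_one fun _ ht => by simp only [hψ.deriv_deriv_eqOn ht]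

theorem sq_deriv_le {x ε : ℝ} (hx : x ∈ Icc 0 1) (hε : 0 < ε) :
    deriv ψ x ^ 2 ≤ (∫ y in (0:ℝ)..1, deriv ψ y ^ 2) / ε + ε * D ψ := by
  have hg := hψ.contDiffOn_derivWithin
  obtain ⟨c, hc, hgc⟩ := exists_hasDerivAt_eq_zero zero_lt_one hψ.1.continuousOn
    (hψ.2.1.trans hψ.2.2.symm) fun t ht => hψ.1.hasDerivAt_derivWithin_Icc two_ne_zero ht
  have hagmon := sq_le_integral_of_hasDerivAt hg.continuousOn
    hψ.continuousOn_derivWithin_derivWithin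
    (fun t ht => hg.hasDerivAt_derivWithin_Icc one_ne_zero ht) (Ioo_subset_Icc_self hc) hgc hx hε
  have hint : ∀ {f : ℝ → ℝ}, ContinuousOn f (Icc 0 1) →
      IntervalIntegrable (fun t => f t ^ 2) volume 0 1 :=
    fun hf => (hf.pow 2).intervalIntegrable_of_Icc zero_le_one
  rw [integral_add ((hint hg.continuousOn).div_const ε)
    ((hint hψ.continuousOn_derivWithin_derivWithin).const_mul ε), intervalIntegral.integral_div,
    intervalIntegral.integral_const_mul] at hagmon
  rw [hψ.integral_sq_deriv, hψ.D_eq]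
  exact (sq_deriv_le_sq_derivWithin (uniqueDiffOn_Icc zero_lt_one x hx)).trans hagmon

theorem Z_sub_mul_D_le (k0 k1 : ℝ) {μ : ℝ} (hμ : 0 < μ) :
    Z k0 k1 ψ - μ * D ψ ≤
      (|k0| + |k1|) * (|k0| + |k1| + 1) / μ * ∫ y in (0:ℝ)..1, deriv ψ y ^ 2 := by
  set K := |k0| + |k1|
  set B := ∫ y in (0:ℝ)..1, deriv ψ y ^ 2
  have hK : 0 ≤ K := by positivity
  -- `ε = μ / (K + 1)` makes the coefficient of `D ψ` nonpositive
  have hε : 0 < μ / (K + 1) := by positivity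
  have h0 := hψ.sq_deriv_le (left_mem_Icc.2 zero_le_one) hε
  have h1 := hψ.sq_deriv_le (right_mem_Icc.2 zero_le_one) hε
  have hD : 0 ≤ D ψ := integral_nonneg zero_le_one fun _ _ => sq_nonneg _
  have hZ : Z k0 k1 ψ ≤ K * (B / (μ / (K + 1)) + μ / (K + 1) * D ψ) := by
    have e0 := mul_le_mul_of_nonneg_right (le_abs_self k0) (sq_nonneg (deriv ψ 0))
    have e1 := mul_le_mul_of_nonneg_right (le_abs_self k1) (sq_nonneg (deriv ψ 1))
    have f0 := mul_le_mul_of_nonneg_left h0 (abs_nonneg k0)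
    have f1 := mul_le_mul_of_nonneg_left h1 (abs_nonneg k1)
    unfold Z
    linarith
  calc Z k0 k1 ψ - μ * D ψ ≤ K * (B / (μ / (K + 1)) + μ / (K + 1) * D ψ) - μ * D ψ := by
        linarith
    _ = K * (K + 1) / μ * B - μ / (K + 1) * D ψ := by field_simp; ring
    _ ≤ K * (K + 1) / μ * B := by linarith [mul_nonneg hε.le hD]

theorem integral_two_mul_sq_deriv_add (s : ℝ) :
    ∫ y in (0:ℝ)..1, (2 * deriv ψ y ^ 2 + s * ψ y ^ 2) =
      2 * (∫ y in (0:ℝ)..1, deriv ψ y ^ 2) + s * ∫ y in (0:ℝ)..1, ψ y ^ 2 := by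
  have hint : IntervalIntegrable (fun y => deriv ψ y ^ 2) volume 0 1 := by
    rw [intervalIntegrable_congr_uIoo (g := fun y => derivWithin ψ (Icc 0 1) y ^ 2)
      fun _ ht => by simp only [hψ.deriv_eqOn (by rwa [uIoo_of_le zero_le_one] at ht)]]
    exact (hψ.contDiffOn_derivWithin.continuousOn.pow 2).intervalIntegrable_of_Icc zero_le_one
  rw [integral_add (hint.const_mul 2)
      ((hψ.1.continuousOn.fun_pow 2).intervalIntegrable_of_Icc zero_le_one |>.const_mul s),
    intervalIntegral.integral_const_mul, intervalIntegral.integral_const_mul]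

theorem integral_sq_pos (hnz : NonzeroOn01 ψ) : 0 < ∫ y in (0:ℝ)..1, ψ y ^ 2 := by
  obtain ⟨y, hy, hψy⟩ := hnz
  have hy' : y ∈ Ioo 0 1 := ⟨lt_of_le_of_ne hy.1 (by rintro rfl; exact hψy hψ.2.1),
    lt_of_le_of_ne hy.2 (by rintro rfl; exact hψy hψ.2.2)⟩
  have hcont := hψ.1.continuousOn.mono (Ioo_subset_Icc_self (a := (0:ℝ)) (b := 1))
  have hU : IsOpen (Ioo 0 1 ∩ ψ ⁻¹' {0}ᶜ) :=
    hcont.isOpen_inter_preimage isOpen_Ioo isOpen_compl_singleton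
  rw [integral_pos_iff_support_of_nonneg_ae (ae_of_all _ fun _ => sq_nonneg _)
    ((hψ.1.continuousOn.pow 2).intervalIntegrable_of_Icc zero_le_one)]
  refine ⟨zero_lt_one, (hU.measure_pos volume ⟨y, hy', hψy⟩).trans_le (measure_mono ?_)⟩
  rintro t ⟨ht, hψt⟩
  exact ⟨by simpa using hψt, Ioo_subset_Ioc_self ht⟩

end Admissible

theorem nonzeroOn01_of_D_ne_zero {ψ : ℝ → ℝ} (hD : D ψ ≠ 0) : NonzeroOn01 ψ := by
  by_contra h
  simp only [NonzeroOn01, not_exists, not_and, not_not] at h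
  refine hD ((integral_congr_Ioo_of_le zero_le_one fun t ht => ?_).trans integral_zero)
  have hψ0 : ψ =ᶠ[nhds t] 0 := Filter.eventuallyEq_of_mem (Ioo_mem_nhds ht.1 ht.2)
    fun u hu => h u (Ioo_subset_Icc_self hu)
  simp [hψ0.deriv.deriv_eq]

theorem exists_Z_sub_mul_D_pos {k0 k1 μ : ℝ} (hμ0 : 0 < μ) (hμ : μ < muc k0 k1) :
    ∃ ψ, Admissible ψ ∧ NonzeroOn01 ψ ∧ 0 < Z k0 k1 ψ - μ * D ψ := by
  have hne : (mucSet k0 k1).Nonempty := by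
    by_contra h
    rw [muc, not_nonempty_iff_eq_empty.1 h, Real.sSup_empty] at hμ
    linarith
  obtain ⟨_, ⟨ψ, hψ, hD, rfl⟩, hlt⟩ := exists_lt_of_lt_csSup hne hμ
  have hDpos : 0 < D ψ := (integral_nonneg zero_le_one fun _ _ => sq_nonneg _).lt_of_ne' hD
  rw [lt_div_iff₀ hDpos] at hlt
  exact ⟨ψ, hψ, nonzeroOn01_of_D_ne_zero hD, by linarith⟩

theorem Nstar_eq_ratioSup (k0 k1 μ s : ℝ) :
    Nstar k0 k1 μ s = ratioSup (ι := {ψ // Admissible ψ ∧ NonzeroOn01 ψ})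
      (fun ψ => Z k0 k1 ψ - μ * D ψ) (fun ψ => μ * (2 * ∫ y in (0:ℝ)..1, deriv ψ.1 y ^ 2))
      (fun ψ => μ * ∫ y in (0:ℝ)..1, ψ.1 y ^ 2) s := by
  refine congrArg sSup (ext fun r => ⟨?_, ?_⟩)
  · rintro ⟨ψ, hψ, hnz, rfl⟩
    exact ⟨⟨ψ, hψ, hnz⟩, by rw [hψ.integral_two_mul_sq_deriv_add]; ring_nf⟩
  · rintro ⟨⟨ψ, hψ, hnz⟩, rfl⟩
    exact ⟨ψ, hψ, hnz, by rw [hψ.integral_two_mul_sq_deriv_add]; ring_nf⟩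

theorem exists_unique_critical_frequency_general (k0 k1 μ : ℝ)
    (hμ0 : 0 < μ) (hμ : μ < muc k0 k1) :
    ∃! sc : ℝ, 0 < sc ∧ sc = Nstar k0 k1 μ sc := by
  obtain ⟨ψ₀, hψ₀, hnz₀, hpos⟩ := exists_Z_sub_mul_D_pos hμ0 hμ
  simp only [Nstar_eq_ratioSup]
  refine existsUnique_pos_eq_ratioSup
    (K := (|k0| + |k1|) * (|k0| + |k1| + 1) / μ / (2 * μ)) (fun ψ => ?_) (fun ψ => ?_)
    (fun ψ => ?_) ⟨⟨ψ₀, hψ₀, hnz₀⟩, hpos⟩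
  · have : 0 ≤ ∫ y in (0:ℝ)..1, deriv ψ.1 y ^ 2 :=
      integral_nonneg zero_le_one fun _ _ => sq_nonneg _
    positivity
  · exact mul_pos hμ0 (ψ.2.1.integral_sq_pos ψ.2.2)
  · refine (ψ.2.1.Z_sub_mul_D_le k0 k1 hμ0).trans_eq ?_
    field_simp

/-- if `μ_c > 0` and `0 < μ < μ_c`, there exists a unique critical
squared frequency `s_c > 0` with `s_c = N*(s_c)`. -/
theorem exists_unique_critical_frequency (k0 k1 μ : ℝ) (hmuc : 0 < muc k0 k1)
    (hμ0 : 0 < μ) (hμ : μ < muc k0 k1) :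
    ∃! sc : ℝ, 0 < sc ∧ sc = Nstar k0 k1 μ sc :=
  exists_unique_critical_frequency_general k0 k1 μ hμ0 hμ
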